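/- arXiv:2603.17997 — 7 statements merged into one kernel-verified Lean document; each statement's English description precedes it below -/
import Mathlib

section
/- For nonempty subsets I, T of {1,...,m}, one has tr(Q_I Q_T) = |I ∩ T| + |I \ T| · |T \ I| / (|I| · |T|), where Q_S := P_S + (1/m) J for P_S = D_S - (1/|S|) J_S and J the all-ones m×m matrix. In particular tr(Q_I Q_T) ≥ |I ∩ T|. -/
open Matrix Finset

noncomputable def indVec (m : ℕ) (T : Finset (Fin m)) : Fin m → ℝ :=
  fun i => if i ∈ T then 1 else 0

noncomputable def Pmat (m : ℕ) (T : Finset (Fin m)) : Matrix (Fin m) (Fin m) ℝ :=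
  Matrix.diagonal (indVec m T) - ((T.card : ℝ))⁻¹ • vecMulVec (indVec m T) (indVec m T)

noncomputable def Qmat (m : ℕ) (T : Finset (Fin m)) : Matrix (Fin m) (Fin m) ℝ :=
  Pmat m T + ((m : ℝ))⁻¹ • Matrix.of (fun _ _ => (1 : ℝ))

lemma my_vecMulVec_mul_vecMulVec {m : ℕ} (a b c d : Fin m → ℝ) :
    vecMulVec a b * vecMulVec c d = (b ⬝ᵥ c) • vecMulVec a d := by
  ext i j
  rw [Matrix.mul_apply]
  simp only [vecMulVec_apply, Matrix.smul_apply, dotProduct, smul_eq_mul,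
    Finset.sum_mul]
  apply Finset.sum_congr rfl
  intros; ring

lemma my_diag_mul_vecMulVec {m : ℕ} (u a b : Fin m → ℝ) :
    Matrix.diagonal u * vecMulVec a b = vecMulVec (u * a) b := by
  ext i j
  simp [Matrix.diagonal_mul, vecMulVec_apply]
  ring

lemma my_vecMulVec_mul_diag {m : ℕ} (a b u : Fin m → ℝ) :
    vecMulVec a b * Matrix.diagonal u = vecMulVec a (b * u) := by
  ext i j
  simp [Matrix.mul_diagonal, vecMulVec_apply]
  ring

lemma my_trace_vecMulVec {m : ℕ} (a b : Fin m → ℝ) :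
    Matrix.trace (vecMulVec a b) = a ⬝ᵥ b := by
  simp [Matrix.trace, Matrix.diag, vecMulVec_apply, dotProduct]

lemma indVec_mul_self {m : ℕ} (I : Finset (Fin m)) :
    indVec m I * indVec m I = indVec m I := by
  funext i
  simp only [Pi.mul_apply, indVec]
  split <;> simp

lemma one_fun_mul {m : ℕ} (w : Fin m → ℝ) :
    (fun _ : Fin m => (1 : ℝ)) * w = w := funext fun i => one_mul _

lemma mul_one_fun {m : ℕ} (w : Fin m → ℝ) :
    w * (fun _ : Fin m => (1 : ℝ)) = w := funext fun i => mul_one _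

lemma indVec_dot {m : ℕ} (I T : Finset (Fin m)) :
    indVec m I ⬝ᵥ indVec m T = ((I ∩ T).card : ℝ) := by
  have h : ∀ i : Fin m, indVec m I i * indVec m T i = if i ∈ I ∩ T then (1:ℝ) else 0 := by
    intro i; simp [indVec, Finset.mem_inter]; split_ifs <;> simp_all
  simp only [dotProduct, h, Finset.sum_ite_mem, Finset.univ_inter, Finset.sum_const,
    nsmul_eq_mul, mul_one]

lemma indVec_dot_one {m : ℕ} (I : Finset (Fin m)) :
    indVec m I ⬝ᵥ (fun _ => (1:ℝ)) = (I.card : ℝ) := by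
  simp only [dotProduct, indVec, mul_one, Finset.sum_ite_mem, Finset.univ_inter,
    Finset.sum_const, nsmul_eq_mul, mul_one]

lemma one_dot_indVec {m : ℕ} (I : Finset (Fin m)) :
    (fun _ => (1:ℝ)) ⬝ᵥ indVec m I = (I.card : ℝ) := by
  simp only [dotProduct, indVec, one_mul, Finset.sum_ite_mem, Finset.univ_inter,
    Finset.sum_const, nsmul_eq_mul]
  ring

lemma one_dot_one {m : ℕ} :
    (fun _ : Fin m => (1:ℝ)) ⬝ᵥ (fun _ => (1:ℝ)) = (m : ℝ) := by
  simp [dotProduct]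

theorem stmt2 (m : ℕ) (hm : 1 ≤ m) (I T : Finset (Fin m)) (hI : I.Nonempty)
    (hT : T.Nonempty) :
    Matrix.trace (Qmat m I * Qmat m T) =
        ((I ∩ T).card : ℝ) +
          ((I \ T).card : ℝ) * ((T \ I).card : ℝ) / ((I.card : ℝ) * (T.card : ℝ)) ∧
      ((I ∩ T).card : ℝ) ≤ Matrix.trace (Qmat m I * Qmat m T) := by
  have hJ : (Matrix.of (fun _ _ => (1 : ℝ)) : Matrix (Fin m) (Fin m) ℝ)
      = vecMulVec (fun _ => (1:ℝ)) (fun _ => (1:ℝ)) := by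
    ext i j; simp [vecMulVec_apply]
  have hm0 : (m : ℝ) ≠ 0 := Nat.cast_ne_zero.mpr (by omega)
  have hI0 : (I.card : ℝ) ≠ 0 := Nat.cast_ne_zero.mpr (Finset.card_ne_zero_of_mem hI.choose_spec)
  have hT0 : (T.card : ℝ) ≠ 0 := Nat.cast_ne_zero.mpr (Finset.card_ne_zero_of_mem hT.choose_spec)
  have hIT : ((I \ T).card : ℝ) = (I.card : ℝ) - ((I ∩ T).card : ℝ) := by
    have := Finset.card_sdiff_add_card_inter I T
    have := Nat.le_of_eq this
    push_cast [← Finset.card_sdiff_add_card_inter I T]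
    ring
  have hTI : ((T \ I).card : ℝ) = (T.card : ℝ) - ((I ∩ T).card : ℝ) := by
    have h := Finset.card_sdiff_add_card_inter T I
    rw [Finset.inter_comm] at h
    push_cast [← h]
    ring
  have key : Matrix.trace (Qmat m I * Qmat m T) =
      ((I ∩ T).card : ℝ) + (1 - ((I ∩ T).card : ℝ) / (T.card : ℝ)
        - ((I ∩ T).card : ℝ) / (I.card : ℝ)
        + ((I ∩ T).card : ℝ) * ((I ∩ T).card : ℝ) / ((I.card : ℝ) * (T.card : ℝ))) := by
    simp only [Qmat, Pmat, hJ, Matrix.add_mul, Matrix.mul_add, Matrix.sub_mul,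
      Matrix.mul_sub, Matrix.smul_mul, Matrix.mul_smul, smul_smul,
      Matrix.diagonal_mul_diagonal, my_diag_mul_vecMulVec, my_vecMulVec_mul_diag,
      my_vecMulVec_mul_vecMulVec, Matrix.trace_add, Matrix.trace_sub, Matrix.trace_smul,
      my_trace_vecMulVec, Matrix.trace_diagonal, indVec_mul_self, one_fun_mul, mul_one_fun,
      indVec_dot, indVec_dot_one, one_dot_indVec, one_dot_one, smul_eq_mul]
    have hmul : indVec m I * indVec m T = indVec m (I ∩ T) := by
      funext i; simp only [Pi.mul_apply, indVec, Finset.mem_inter]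
      split_ifs <;> simp_all
    have hsum : (∑ i, indVec m I i * indVec m T i) = ((I ∩ T).card : ℝ) := by
      rw [show (∑ i, indVec m I i * indVec m T i) = indVec m I ⬝ᵥ indVec m T from rfl,
        indVec_dot]
    rw [hsum, hmul, indVec_dot, indVec_dot,
      show I ∩ (I ∩ T) = I ∩ T by rw [← Finset.inter_assoc, Finset.inter_self],
      show (I ∩ T) ∩ T = I ∩ T by rw [Finset.inter_assoc, Finset.inter_self]]
    field_simp
    ring
  have main : Matrix.trace (Qmat m I * Qmat m T) =
      ((I ∩ T).card : ℝ) +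
        ((I \ T).card : ℝ) * ((T \ I).card : ℝ) / ((I.card : ℝ) * (T.card : ℝ)) := by
    rw [key, hIT, hTI]
    field_simp
    ring
  refine ⟨main, ?_⟩
  rw [main]
  have : (0:ℝ) ≤ ((I \ T).card : ℝ) * ((T \ I).card : ℝ) / ((I.card : ℝ) * (T.card : ℝ)) := by
    positivity
  linarith
end

section
/- For nonempty subsets I, T of {1,...,m}, equality tr(Q_I Q_T) = |I ∩ T| holds if and only if I ⊆ T or T ⊆ I. -/
open Matrix Finset

lemma trace_dd {m : ℕ} (v w : Fin m → ℝ) :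
    Matrix.trace (diagonal v * diagonal w) = ∑ i, v i * w i := by
  simp [Matrix.trace, Matrix.diag, Matrix.mul_apply, Matrix.diagonal_apply]

lemma trace_dv {m : ℕ} (d u v : Fin m → ℝ) :
    Matrix.trace (diagonal d * vecMulVec u v) = ∑ i, d i * (u i * v i) := by
  simp [Matrix.trace, Matrix.diag, Matrix.mul_apply, Matrix.diagonal_apply, vecMulVec_apply]

lemma trace_vd {m : ℕ} (d u v : Fin m → ℝ) :
    Matrix.trace (vecMulVec u v * diagonal d) = ∑ i, u i * v i * d i := by
  simp [Matrix.trace, Matrix.diag, Matrix.mul_apply, Matrix.diagonal_apply, vecMulVec_apply]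

lemma trace_vv {m : ℕ} (u v w x : Fin m → ℝ) :
    Matrix.trace (vecMulVec u v * vecMulVec w x)
      = (∑ i, v i * w i) * (∑ i, x i * u i) := by
  simp only [Matrix.trace, Matrix.diag, Matrix.mul_apply, vecMulVec_apply, Finset.sum_mul,
    Finset.mul_sum]
  apply Finset.sum_congr rfl; intro i _; apply Finset.sum_congr rfl; intro j _; ring

lemma sum_ind_mul {m : ℕ} (I T : Finset (Fin m)) :
    ∑ i, indVec m I i * indVec m T i = ((I ∩ T).card : ℝ) := by
  have : ∀ i, indVec m I i * indVec m T i = if i ∈ I ∩ T then (1:ℝ) else 0 := by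
    intro i
    simp only [indVec, Finset.mem_inter]
    by_cases h1 : i ∈ I <;> by_cases h2 : i ∈ T <;> simp [h1, h2]
  simp only [this, Finset.sum_ite_eq]
  rw [Finset.sum_ite_mem, Finset.univ_inter, Finset.sum_const, nsmul_eq_mul, mul_one]

lemma sum_ind {m : ℕ} (I : Finset (Fin m)) : ∑ i, indVec m I i = (I.card : ℝ) := by
  simp [indVec]

lemma Qmat_eq (m : ℕ) (S : Finset (Fin m)) :
    Qmat m S = diagonal (indVec m S) - ((S.card : ℝ))⁻¹ • vecMulVec (indVec m S) (indVec m S)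
      + ((m : ℝ))⁻¹ • vecMulVec (fun _ => (1:ℝ)) (fun _ => (1:ℝ)) := by
  unfold Qmat Pmat
  congr 1
  ext i j
  simp [vecMulVec_apply]

lemma trace_QQ (m : ℕ) (hm : 1 ≤ m) (I T : Finset (Fin m)) (hI : I.Nonempty)
    (hT : T.Nonempty) :
    Matrix.trace (Qmat m I * Qmat m T)
      = ((I ∩ T).card : ℝ) - ((I ∩ T).card : ℝ) * ((I.card : ℝ))⁻¹
        - ((I ∩ T).card : ℝ) * ((T.card : ℝ))⁻¹
        + ((I ∩ T).card : ℝ) * ((I ∩ T).card : ℝ) * (((I.card : ℝ))⁻¹ * ((T.card : ℝ))⁻¹)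
        + 1 := by
  have ha : (I.card : ℝ) ≠ 0 := Nat.cast_ne_zero.mpr (Finset.card_ne_zero_of_mem hI.choose_spec)
  have hb : (T.card : ℝ) ≠ 0 := Nat.cast_ne_zero.mpr (Finset.card_ne_zero_of_mem hT.choose_spec)
  have hmne : (m : ℝ) ≠ 0 := Nat.cast_ne_zero.mpr (by omega)
  have hvw := sum_ind_mul I T
  have hwv := sum_ind_mul T I
  have hvv := sum_ind_mul I I
  have hww := sum_ind_mul T T
  have hv := sum_ind I
  have hw := sum_ind T
  rw [Finset.inter_self] at hvv hww
  rw [Finset.inter_comm T I] at hwv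
  rw [Qmat_eq, Qmat_eq]
  simp only [sub_mul, mul_sub, add_mul, mul_add, smul_mul_assoc, Matrix.mul_smul,
    Matrix.trace_sub, Matrix.trace_add, Matrix.trace_smul, smul_eq_mul, trace_dd, trace_dv,
    trace_vd, trace_vv, smul_smul]
  have hone : ∑ _i : Fin m, (1:ℝ) * 1 = (m : ℝ) := by simp
  have hv1 : ∑ i, indVec m I i * (1:ℝ) = (I.card : ℝ) := by simpa using hv
  have h1v : ∑ i, (1:ℝ) * indVec m I i = (I.card : ℝ) := by simpa using hv
  have hw1 : ∑ i, indVec m T i * (1:ℝ) = (T.card : ℝ) := by simpa using hw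
  have h1w : ∑ i, (1:ℝ) * indVec m T i = (T.card : ℝ) := by simpa using hw
  have hvww : ∑ i, indVec m I i * (indVec m T i * indVec m T i) = ((I ∩ T).card : ℝ) := by
    rw [← hvw]; apply Finset.sum_congr rfl; intro i _
    simp only [indVec]; by_cases h : i ∈ T <;> simp [h]
  have hvvw : ∑ i, indVec m I i * indVec m I i * indVec m T i = ((I ∩ T).card : ℝ) := by
    rw [← hvw]; apply Finset.sum_congr rfl; intro i _
    simp only [indVec]; by_cases h : i ∈ I <;> simp [h]
  have hv11 : ∑ i, indVec m I i * (1 * (1:ℝ)) = (I.card : ℝ) := by simpa using hv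
  have hw11 : ∑ i, (1:ℝ) * 1 * indVec m T i = (T.card : ℝ) := by simpa using hw
  rw [hvw] at *
  rw [hone, hv1, h1v, hw1, h1w, hvww, hvvw, hv11, hw11, hwv]
  field_simp
  ring

theorem stmt3 (m : ℕ) (hm : 1 ≤ m) (I T : Finset (Fin m)) (hI : I.Nonempty)
    (hT : T.Nonempty) :
    Matrix.trace (Qmat m I * Qmat m T) = ((I ∩ T).card : ℝ) ↔ I ⊆ T ∨ T ⊆ I := by
  have ha : (I.card : ℝ) ≠ 0 := Nat.cast_ne_zero.mpr (Finset.card_ne_zero_of_mem hI.choose_spec)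
  have hb : (T.card : ℝ) ≠ 0 := Nat.cast_ne_zero.mpr (Finset.card_ne_zero_of_mem hT.choose_spec)
  set k : ℝ := ((I ∩ T).card : ℝ) with hk
  set a : ℝ := (I.card : ℝ) with hadef
  set b : ℝ := (T.card : ℝ) with hbdef
  rw [trace_QQ m hm I T hI hT, ← sub_eq_zero]
  have heq : k - k * a⁻¹ - k * b⁻¹ + k * k * (a⁻¹ * b⁻¹) + 1 - k
      = (a - k) * (b - k) * (a⁻¹ * b⁻¹) := by
    field_simp
    ring
  have hinv : a⁻¹ * b⁻¹ ≠ 0 := mul_ne_zero (inv_ne_zero ha) (inv_ne_zero hb)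
  rw [heq, mul_eq_zero, mul_eq_zero]
  have h1 : a - k = 0 ↔ I ⊆ T := by
    rw [sub_eq_zero, hadef, hk, Nat.cast_inj]
    constructor
    · intro h
      have := Finset.eq_of_subset_of_card_le Finset.inter_subset_left h.le
      exact Finset.inter_eq_left.mp this
    · intro h
      rw [Finset.inter_eq_left.mpr h]
  have h2 : b - k = 0 ↔ T ⊆ I := by
    rw [sub_eq_zero, hbdef, hk, Nat.cast_inj]
    constructor
    · intro h
      have := Finset.eq_of_subset_of_card_le Finset.inter_subset_right h.le
      exact Finset.inter_eq_right.mp this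
    · intro h
      rw [Finset.inter_eq_right.mpr h]
  simp [h1, h2, hinv]
end

section
/- For a nonempty subset T of {1,...,m}, the matrix Q_T = P_T + (1/m) J is an orthogonal projection (symmetric and idempotent) of rank |T|. -/
open Matrix Finset

lemma indVec_sq (m : ℕ) (T : Finset (Fin m)) (i : Fin m) :
    indVec m T i * indVec m T i = indVec m T i := by
  unfold indVec; by_cases h : i ∈ T <;> simp [h]

lemma indVec_sum (m : ℕ) (T : Finset (Fin m)) :
    ∑ k : Fin m, indVec m T k = (T.card : ℝ) := by
  unfold indVec
  rw [Finset.sum_ite_mem, Finset.univ_inter, Finset.sum_const, nsmul_eq_mul, mul_one]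

section helpers

variable {n : Type*} [Fintype n] [DecidableEq n]

lemma diag_mul_vmv (v : n → ℝ) (hsq : ∀ i, v i * v i = v i) :
    Matrix.diagonal v * vecMulVec v v = vecMulVec v v := by
  ext i j
  rw [Matrix.diagonal_mul, vecMulVec_apply]
  rw [← mul_assoc, hsq]

lemma vmv_mul_diag (v : n → ℝ) (hsq : ∀ i, v i * v i = v i) :
    vecMulVec v v * Matrix.diagonal v = vecMulVec v v := by
  ext i j
  rw [Matrix.mul_diagonal, vecMulVec_apply]
  rw [mul_assoc, hsq]

lemma vmv_mul_vmv (v : n → ℝ) (t : ℝ) (hsq : ∀ i, v i * v i = v i)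
    (hs : ∑ k, v k = t) :
    vecMulVec v v * vecMulVec v v = t • vecMulVec v v := by
  ext i j
  rw [Matrix.mul_apply, Matrix.smul_apply, vecMulVec_apply, smul_eq_mul]
  have h : ∀ k, vecMulVec v v i k * vecMulVec v v k j = v i * v j * v k := by
    intro k
    rw [vecMulVec_apply, vecMulVec_apply]
    calc v i * v k * (v k * v j) = v i * v j * (v k * v k) := by ring
    _ = v i * v j * v k := by rw [hsq]
  rw [Finset.sum_congr rfl fun k _ => h k, ← Finset.mul_sum, hs]
  ring

end helpers

lemma Pmat_idem (m : ℕ) (T : Finset (Fin m)) (hT : T.Nonempty) :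
    Pmat m T * Pmat m T = Pmat m T := by
  have ht : ((T.card : ℝ)) ≠ 0 := by
    simp [Finset.card_ne_zero_of_mem hT.choose_spec]
  have hsq := indVec_sq m T
  have hDD : Matrix.diagonal (indVec m T) * Matrix.diagonal (indVec m T)
      = Matrix.diagonal (indVec m T) := by
    rw [Matrix.diagonal_mul_diagonal]
    exact congrArg _ (funext hsq)
  have hDV := diag_mul_vmv (indVec m T) hsq
  have hVD := vmv_mul_diag (indVec m T) hsq
  have hVV := vmv_mul_vmv (indVec m T) (T.card : ℝ) hsq (indVec_sum m T)
  unfold Pmat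
  rw [sub_mul, mul_sub, mul_sub, Matrix.mul_smul, Matrix.smul_mul, Matrix.smul_mul,
    Matrix.mul_smul, hDD, hDV, hVD, hVV, smul_smul, smul_smul]
  have key : (T.card : ℝ)⁻¹ * (T.card : ℝ)⁻¹ * (T.card : ℝ) = (T.card : ℝ)⁻¹ := by
    field_simp
  rw [key]
  abel

lemma Pmat_mul_J (m : ℕ) (T : Finset (Fin m)) (hT : T.Nonempty) :
    Pmat m T * Matrix.of (fun _ _ => (1 : ℝ)) = 0 := by
  have ht : ((T.card : ℝ)) ≠ 0 := by
    simp [Finset.card_ne_zero_of_mem hT.choose_spec]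
  ext i j
  rw [Matrix.mul_apply]
  unfold Pmat
  have h : ∀ k, (Matrix.diagonal (indVec m T) -
      (T.card : ℝ)⁻¹ • vecMulVec (indVec m T) (indVec m T)) i k *
      Matrix.of (fun _ _ => (1 : ℝ)) k j
      = Matrix.diagonal (indVec m T) i k
        - (T.card : ℝ)⁻¹ * (indVec m T i * indVec m T k) := by
    intro k
    simp [Matrix.sub_apply, vecMulVec_apply]
  rw [Finset.sum_congr rfl fun k _ => h k, Finset.sum_sub_distrib]
  have h1 : ∑ k : Fin m, Matrix.diagonal (indVec m T) i k = indVec m T i := by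
    simp_rw [Matrix.diagonal_apply]
    simp
  have h2 : ∑ k : Fin m, (T.card : ℝ)⁻¹ * (indVec m T i * indVec m T k)
      = indVec m T i := by
    rw [← Finset.mul_sum, ← Finset.mul_sum, indVec_sum]
    field_simp
  rw [h1, h2]
  simp

lemma J_mul_Pmat (m : ℕ) (T : Finset (Fin m)) (hT : T.Nonempty) :
    Matrix.of (fun _ _ => (1 : ℝ)) * Pmat m T = 0 := by
  have ht : ((T.card : ℝ)) ≠ 0 := by
    simp [Finset.card_ne_zero_of_mem hT.choose_spec]
  ext i j
  rw [Matrix.mul_apply]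
  unfold Pmat
  have h : ∀ k, Matrix.of (fun _ _ => (1 : ℝ)) i k *
      (Matrix.diagonal (indVec m T) -
      (T.card : ℝ)⁻¹ • vecMulVec (indVec m T) (indVec m T)) k j
      = Matrix.diagonal (indVec m T) k j
        - (T.card : ℝ)⁻¹ * (indVec m T k * indVec m T j) := by
    intro k
    simp [Matrix.sub_apply, vecMulVec_apply]
  rw [Finset.sum_congr rfl fun k _ => h k, Finset.sum_sub_distrib]
  have h1 : ∑ k : Fin m, Matrix.diagonal (indVec m T) k j = indVec m T j := by
    simp_rw [Matrix.diagonal_apply]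
    simp
  have h2 : ∑ k : Fin m, (T.card : ℝ)⁻¹ * (indVec m T k * indVec m T j)
      = indVec m T j := by
    have e : ∀ k : Fin m, (T.card : ℝ)⁻¹ * (indVec m T k * indVec m T j)
        = ((T.card : ℝ)⁻¹ * indVec m T j) * indVec m T k := fun k => by ring
    rw [Finset.sum_congr rfl fun k _ => e k, ← Finset.mul_sum, indVec_sum]
    field_simp
  rw [h1, h2]
  simp

lemma Qmat_idem (m : ℕ) (hm : 1 ≤ m) (T : Finset (Fin m)) (hT : T.Nonempty) :
    Qmat m T * Qmat m T = Qmat m T := by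
  have hmne : ((m : ℝ)) ≠ 0 := by
    simp; omega
  have hJJ : (Matrix.of (fun _ _ => (1 : ℝ)) : Matrix (Fin m) (Fin m) ℝ) *
      Matrix.of (fun _ _ => (1 : ℝ)) = (m : ℝ) • Matrix.of (fun _ _ => (1 : ℝ)) := by
    ext i j
    simp [Matrix.mul_apply]
  unfold Qmat
  rw [add_mul, mul_add, mul_add, Matrix.mul_smul, Matrix.smul_mul, Matrix.smul_mul,
    Matrix.mul_smul, Pmat_idem m T hT, Pmat_mul_J m T hT, J_mul_Pmat m T hT, hJJ,
    smul_smul, smul_smul]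
  have key : (m : ℝ)⁻¹ * (m : ℝ)⁻¹ * (m : ℝ) = (m : ℝ)⁻¹ := by field_simp
  rw [key]
  simp

lemma Qmat_symm (m : ℕ) (T : Finset (Fin m)) : (Qmat m T).IsSymm := by
  unfold Matrix.IsSymm Qmat Pmat
  ext i j
  simp only [Matrix.transpose_apply, Matrix.add_apply, Matrix.sub_apply,
    Matrix.smul_apply, vecMulVec_apply, Matrix.of_apply, smul_eq_mul,
    Matrix.diagonal_apply]
  by_cases h : i = j
  · simp [h]
  · simp only [h, Ne.symm h, if_false]
    ring

lemma Qmat_trace (m : ℕ) (hm : 1 ≤ m) (T : Finset (Fin m)) (hT : T.Nonempty) :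
    (Qmat m T).trace = (T.card : ℝ) := by
  have ht : ((T.card : ℝ)) ≠ 0 := by
    simp [Finset.card_ne_zero_of_mem hT.choose_spec]
  have hmne : ((m : ℝ)) ≠ 0 := by simp; omega
  unfold Matrix.trace Qmat Pmat
  simp only [Matrix.diag_apply, Matrix.add_apply, Matrix.sub_apply, Matrix.smul_apply,
    vecMulVec_apply, Matrix.of_apply, smul_eq_mul, Matrix.diagonal_apply_eq, mul_one]
  rw [Finset.sum_add_distrib, Finset.sum_sub_distrib]
  have h1 : ∑ i : Fin m, (T.card : ℝ)⁻¹ * (indVec m T i * indVec m T i)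
      = 1 := by
    simp_rw [indVec_sq]
    rw [← Finset.mul_sum, indVec_sum]
    field_simp
  have h2 : ∑ _i : Fin m, ((m : ℝ))⁻¹ = 1 := by
    rw [Finset.sum_const, Finset.card_univ, Fintype.card_fin, nsmul_eq_mul]
    field_simp
  rw [indVec_sum, h1, h2]
  ring

theorem stmt4 (m : ℕ) (hm : 1 ≤ m) (T : Finset (Fin m)) (hT : T.Nonempty) :
    (Qmat m T).IsSymm ∧ Qmat m T * Qmat m T = Qmat m T ∧ (Qmat m T).rank = T.card := by
  refine ⟨Qmat_symm m T, Qmat_idem m hm T hT, ?_⟩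
  set Q := Qmat m T with hQ
  have hidem := Qmat_idem m hm T hT
  set f := Q.mulVecLin with hf
  have hff : f.comp f = f := by
    rw [hf, ← Matrix.mulVecLin_mul]
    rw [hQ, hidem]
  have hproj : LinearMap.IsProj (LinearMap.range f) f := by
    constructor
    · intro x; exact LinearMap.mem_range_self f x
    · rintro x ⟨y, rfl⟩
      have := congrArg (fun g => g y) hff
      simpa using this
  have htr := hproj.trace
  have htrQ : LinearMap.trace ℝ (Fin m → ℝ) f = Q.trace := by
    rw [LinearMap.trace_eq_matrix_trace ℝ (Pi.basisFun ℝ (Fin m)),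
      LinearMap.toMatrix_eq_toMatrix']
    rw [hf, ← Matrix.toLin'_apply', LinearMap.toMatrix'_toLin']
  rw [htrQ, hQ, Qmat_trace m hm T hT] at htr
  have : (T.card : ℝ) = ((Q.rank : ℕ) : ℝ) := by
    rw [htr]; rfl
  exact_mod_cast this.symm
end

section
/- Ky Fan's maximum principle: if S is a real symmetric m×m matrix with eigenvalues θ_1 ≥ ... ≥ θ_m, and P is any orthogonal projection (symmetric idempotent matrix) of rank k, then tr(P S) ≤ θ_1 + ... + θ_k. -/
/-!
Diagonalise `S = U diag(λ) Uᵀ` with `U` orthogonal. Then `tr(P S) = ∑ λᵢ Qᵢᵢ` where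
`Q = Uᵀ P U` is again a symmetric idempotent, of trace `rank P = k`. Its diagonal entries
`Qᵢᵢ = ∑ⱼ Qᵢⱼ²` lie in `[0, 1]` and sum to `k`, and a weighted sum `∑ θᵢ qᵢ` of the sorted
eigenvalues with such weights is at most `θ₁ + ⋯ + θₖ`: with the threshold `t = θₖ`, every
term of `∑ (θᵢ - t)(1_{i<k} - qᵢ)` is nonnegative, and `∑ (1_{i<k} - qᵢ) = 0`.
-/

open Matrix Finset

namespace Matrix

variable {n : Type*} [Fintype n]

theorem trace_eq_rank_of_isIdempotentElem {K : Type*} [Field K] [DecidableEq n]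
    {A : Matrix n n K} (hA : IsIdempotentElem A) : A.trace = A.rank := by
  rw [← trace_toLin'_eq, rank, ← toLin'_apply']
  exact (LinearMap.IsIdempotentElem.isProj_range _ (hA.map toLinAlgEquiv')).trace

theorem IsSymm.apply_self_eq_sum_sq {R : Type*} [Semiring R] {Q : Matrix n n R} (hQ : Q.IsSymm)
    (hQQ : IsIdempotentElem Q) (i : n) : Q i i = ∑ j, Q i j ^ 2 := by
  conv_lhs => rw [← hQQ.eq, mul_apply]
  simp_rw [hQ.apply, sq]

theorem IsSymm.apply_self_mem_Icc {R : Type*} [CommRing R] [LinearOrder R] [IsStrictOrderedRing R]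
    {Q : Matrix n n R} (hQ : Q.IsSymm) (hQQ : IsIdempotentElem Q) (i : n) :
    Q i i ∈ Set.Icc 0 1 := by
  have hsum := hQ.apply_self_eq_sum_sq hQQ i
  have hnonneg : 0 ≤ Q i i := hsum ▸ sum_nonneg fun j _ ↦ sq_nonneg _
  have hsq : Q i i ^ 2 ≤ Q i i :=
    hsum ▸ single_le_sum (f := fun j ↦ Q i j ^ 2) (fun j _ ↦ sq_nonneg _) (mem_univ i)
  exact ⟨hnonneg, by nlinarith⟩

theorem IsHermitian.trace_mul_eq_sum_eigenvalues {S : Matrix n n ℝ} [DecidableEq n]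
    (hS : S.IsHermitian) (P : Matrix n n ℝ) :
    (P * S).trace =
      ∑ i, Unitary.conjStarAlgAut ℝ _ (star hS.eigenvectorUnitary) P i i * hS.eigenvalues i := by
  rw [← trace_map' (Unitary.conjStarAlgAut ℝ _ (star hS.eigenvectorUnitary)), map_mul,
    hS.conjStarAlgAut_star_eigenvectorUnitary, trace]
  simp [mul_diagonal]

end Matrix

theorem sum_mul_le_sum_filter_lt_of_antitone {m k : ℕ} (hkm : k ≤ m) {θ q : Fin m → ℝ}
    (hθ : Antitone θ) (hq : ∀ i, q i ∈ Set.Icc 0 1) (hsum : ∑ i, q i = k) :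
    ∑ i, θ i * q i ≤ ∑ i ∈ univ.filter (fun i : Fin m => (i : ℕ) < k), θ i := by
  obtain ⟨t, hlt, hge⟩ : ∃ t, (∀ i : Fin m, (i : ℕ) < k → t ≤ θ i) ∧
      ∀ i : Fin m, k ≤ (i : ℕ) → θ i ≤ t := by
    rcases Nat.eq_zero_or_pos m with rfl | hm
    · exact ⟨0, fun i ↦ i.elim0, fun i ↦ i.elim0⟩
    · exact ⟨θ ⟨k - 1, by omega⟩, fun i hi ↦ hθ (Fin.le_def.mpr (show (i : ℕ) ≤ k - 1 by omega)),
        fun i hi ↦ hθ (Fin.le_def.mpr (show k - 1 ≤ (i : ℕ) by omega))⟩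
  let e : Fin m → ℝ := fun i ↦ if (i : ℕ) < k then 1 else 0
  have he : ∑ i, e i = k := by
    simp [e, Finset.sum_boole, Fin.card_filter_val_lt, hkm]
  have hfilter : ∑ i ∈ univ.filter (fun i : Fin m => (i : ℕ) < k), θ i = ∑ i, θ i * e i := by
    simp [e, Finset.sum_filter, mul_ite]
  have hterm : 0 ≤ ∑ i, (θ i - t) * (e i - q i) := by
    refine sum_nonneg fun i _ ↦ ?_
    by_cases hi : (i : ℕ) < k
    · simpa [e, hi] using mul_nonneg (sub_nonneg.mpr (hlt i hi)) (sub_nonneg.mpr (hq i).2)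
    · simpa [e, hi] using mul_nonneg_of_nonpos_of_nonpos (sub_nonpos.mpr (hge i (by omega)))
        (neg_nonpos.mpr (hq i).1)
  simp only [sub_mul, mul_sub, sum_sub_distrib, ← mul_sum, he, hsum] at hterm
  linarith

theorem stmt6_general (m : ℕ) (S : Matrix (Fin m) (Fin m) ℝ) (hS : S.IsHermitian)
    (θ : Fin m → ℝ) (hθ : Antitone θ)
    (hθeig : ∃ σ : Equiv.Perm (Fin m), ∀ i, θ i = hS.eigenvalues (σ i))
    (k : ℕ) (hkm : k ≤ m)
    (P : Matrix (Fin m) (Fin m) ℝ) (hPsymm : P.IsSymm) (hPidem : P * P = P)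
    (hPrank : P.rank = k) :
    Matrix.trace (P * S) ≤ ∑ i ∈ Finset.univ.filter (fun i : Fin m => (i : ℕ) < k), θ i := by
  obtain ⟨σ, hσ⟩ := hθeig
  set φ := Unitary.conjStarAlgAut ℝ (Matrix (Fin m) (Fin m) ℝ) (star hS.eigenvectorUnitary)
  have hQsymm : (φ P).IsSymm := by
    rw [← isHermitian_iff_isSymm] at hPsymm ⊢
    exact IsSelfAdjoint.map hPsymm φ
  have hQidem : IsIdempotentElem (φ P) := IsIdempotentElem.map hPidem φ
  have hQtrace : (φ P).trace = k := by
    rw [trace_map', trace_eq_rank_of_isIdempotentElem hPidem, hPrank]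
  calc (P * S).trace = ∑ i, θ i * φ P (σ i) (σ i) := by
        rw [hS.trace_mul_eq_sum_eigenvalues, ← Equiv.sum_comp σ]
        simp only [hσ, mul_comm, φ]
    _ ≤ _ := sum_mul_le_sum_filter_lt_of_antitone hkm hθ
        (fun i ↦ hQsymm.apply_self_mem_Icc hQidem (σ i))
        ((Equiv.sum_comp σ fun i ↦ φ P i i).trans hQtrace)

theorem stmt6 (m : ℕ) (S : Matrix (Fin m) (Fin m) ℝ) (hS : S.IsHermitian)
    (θ : Fin m → ℝ) (hθ : Antitone θ)
    (hθeig : ∃ σ : Equiv.Perm (Fin m), ∀ i, θ i = hS.eigenvalues (σ i))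
    (k : ℕ) (hk1 : 1 ≤ k) (hkm : k ≤ m)
    (P : Matrix (Fin m) (Fin m) ℝ) (hPsymm : P.IsSymm) (hPidem : P * P = P)
    (hPrank : P.rank = k) :
    Matrix.trace (P * S) ≤ ∑ i ∈ Finset.univ.filter (fun i : Fin m => (i : ℕ) < k), θ i :=
  stmt6_general m S hS θ hθ hθeig k hkm P hPsymm hPidem hPrank
end

section
/- Let L be a real symmetric m×m matrix with L·1 = 0 and kernel exactly span{1}, and let M = L + (n/m) J for a positive real n, where J is the all-ones matrix. Then det M = m·n·det(L̂), where L̂ is L with the first row and column deleted. -/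
/-!
Adding all rows of `L + c J` to its first row makes that row `(m + 1) c · 1`; subtracting `c`
times it from the other rows removes `c J`. Adding all columns of the resulting matrix to its
first column leaves the entry `m + 1` in the top-left corner and zeros below it, with
complementary minor `L̂`, so
`det (L + c J) = (m + 1)² c det L̂`; here `c = n / (m + 1)`.
-/

open Matrix

namespace Matrix

variable {R : Type*} [CommRing R] {m : ℕ}

theorem det_updateRow_zero_one_eq_of_mulVec_one_eq_zero
    {A : Matrix (Fin (m + 1)) (Fin (m + 1)) R} (hrow : A *ᵥ 1 = 0) :
    (A.updateRow 0 1).det = (m + 1) * (A.submatrix Fin.succ Fin.succ).det := by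
  have hsums : (fun k ↦ ∑ i, (1 : Fin (m + 1) → R) i • A.updateRow 0 1 k i) =
      Pi.single 0 ((m : R) + 1) := by
    ext k
    cases k using Fin.cases with
    | zero => simp
    | succ k => simpa [mulVec, dotProduct, Fin.succ_ne_zero] using congrFun hrow k.succ
  have hdet := det_updateCol_sum (A.updateRow 0 1) 0 1
  rw [hsums, Pi.one_apply, one_smul, det_succ_column_zero, Fin.sum_univ_succ] at hdet
  rw [← hdet]
  have hminor : ((A.updateRow 0 1).updateCol 0 (Pi.single 0 ((m : R) + 1))).submatrix
      Fin.succ Fin.succ = A.submatrix Fin.succ Fin.succ := by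
    ext i j
    simp [Fin.succ_ne_zero]
  simp [Fin.succ_ne_zero, hminor]

theorem det_add_smul_allOnes_of_vecMul_eq_zero
    {A : Matrix (Fin (m + 1)) (Fin (m + 1)) R} (hcol : 1 ᵥ* A = 0) (c : R) :
    (A + c • of fun _ _ ↦ 1).det = (m + 1) * c * (A.updateRow 0 1).det := by
  set B := A + c • of fun _ _ ↦ (1 : R)
  have hsums : ∑ k, (1 : Fin (m + 1) → R) k • B k = ((m + 1) * c) • 1 := by
    ext j
    have := congrFun hcol j
    simp only [vecMul, dotProduct, Pi.one_apply, one_mul, Pi.zero_apply] at this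
    rw [Finset.sum_apply]
    simp [B, Finset.sum_add_distrib, this]
  have hsub : (B.updateRow 0 1).det = (A.updateRow 0 1).det := by
    refine det_eq_of_forall_row_eq_smul_add_const (fun i ↦ if i = 0 then 0 else c) 0 (by simp) ?_
    intro i j
    cases i using Fin.cases <;> simp [B, Fin.succ_ne_zero]
  have hdet := det_updateRow_sum B 0 1
  rw [hsums, det_updateRow_smul, hsub, Pi.one_apply, one_smul] at hdet
  exact hdet.symm

end Matrix

theorem stmt15_general (m : ℕ) (L : Matrix (Fin (m + 1)) (Fin (m + 1)) ℝ)
    (hLsymm : L.IsSymm)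
    (hL1 : L.mulVec (fun _ => (1 : ℝ)) = 0)
    (n : ℝ)
    (M : Matrix (Fin (m + 1)) (Fin (m + 1)) ℝ)
    (hM : M = L + (n / (m + 1 : ℝ)) • Matrix.of (fun _ _ => (1 : ℝ))) :
    M.det = (m + 1 : ℝ) * n * (L.submatrix Fin.succ Fin.succ).det := by
  have hcol : 1 ᵥ* L = 0 := by rw [← mulVec_transpose, hLsymm.eq]; exact hL1
  rw [hM, det_add_smul_allOnes_of_vecMul_eq_zero hcol,
    det_updateRow_zero_one_eq_of_mulVec_one_eq_zero hL1]
  field_simp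

theorem stmt15 (m : ℕ) (L : Matrix (Fin (m + 1)) (Fin (m + 1)) ℝ)
    (hLsymm : L.IsSymm) (hpsd : L.PosSemidef)
    (hL1 : L.mulVec (fun _ => (1 : ℝ)) = 0)
    (hker : ∀ u : Fin (m + 1) → ℝ, L.mulVec u = 0 ↔ ∃ c : ℝ, u = fun _ => c)
    (n : ℝ) (hn : 0 < n)
    (M : Matrix (Fin (m + 1)) (Fin (m + 1)) ℝ)
    (hM : M = L + (n / (m + 1 : ℝ)) • Matrix.of (fun _ _ => (1 : ℝ))) :
    M.det = (m + 1 : ℝ) * n * (L.submatrix Fin.succ Fin.succ).det :=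
  stmt15_general m L hLsymm hL1 n M hM
end

section
/- Majorization of degrees by eigenvalues: let T_1,...,T_n be nonempty subsets of {1,...,m}, let a_i = #{j : i ∈ T_j} with a_1 ≥ ... ≥ a_m after relabeling, let Q_T = P_T + (1/m)J and M = ∑_j Q_{T_j} with eigenvalues λ_1 ≥ ... ≥ λ_m. Then (λ_1,...,λ_m) majorizes (a_1,...,a_m): for every k < m, ∑_{i≤k} λ_i ≥ ∑_{i≤k} a_i, and ∑_i λ_i = ∑_i a_i. -/
/-!
For a set `S` of coordinates, double counting gives `∑_{i ∈ S} a_i = ∑_j |T_j ∩ S|`, and an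
explicit computation gives `tr (Q_T Q_S) = |T ∩ S| + (1 - |T ∩ S|/|S|) (1 - |T ∩ S|/|T|)`,
so `∑_{i ∈ S} a_i ≤ tr (M Q_S)`. For nonempty `S`, `Q_S` is an orthogonal projection of trace
`|S|`, and Ky Fan's principle bounds `tr (M K)`, for any `0 ≤ K ≤ 1` of trace `k`, by the sum of
the `k` largest eigenvalues of `M`: in an eigenbasis of `M`, `tr (M K)` is a combination of the
eigenvalues with weights in `[0, 1]` summing to `k`. Taking `S = {1, …, k}` gives the partial
sum inequalities, and `tr M = ∑_j tr Q_{T_j} = ∑_j |T_j| = ∑_i a_i` gives the equality.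
-/

open Matrix Finset

open scoped MatrixOrder

theorem sum_mul_le_sum_of_threshold {ι : Type*} [Fintype ι] (lam b : ι → ℝ) {s : Finset ι}
    {L : ℝ} (hs : ∀ i ∈ s, L ≤ lam i) (hsc : ∀ i ∉ s, lam i ≤ L) (hb0 : ∀ i, 0 ≤ b i)
    (hb1 : ∀ i, b i ≤ 1) (hb : ∑ i, b i = #s) :
    ∑ i, lam i * b i ≤ ∑ i ∈ s, lam i := by
  classical
  have hterm : ∀ i, 0 ≤ (lam i - L) * ((if i ∈ s then 1 else 0) - b i) := fun i => by
    by_cases hi : i ∈ s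
    · simpa [hi] using mul_nonneg (sub_nonneg.2 (hs i hi)) (sub_nonneg.2 (hb1 i))
    · simpa [hi] using
        mul_nonneg_of_nonpos_of_nonpos (sub_nonpos.2 (hsc i hi)) (neg_nonpos.2 (hb0 i))
  have hsplit : ∑ i ∈ s, lam i - ∑ i, lam i * b i
      = ∑ i, (lam i - L) * ((if i ∈ s then 1 else 0) - b i) := by
    simp only [mul_sub, sub_mul, mul_ite, mul_one, mul_zero, sum_sub_distrib, sum_ite_mem,
      univ_inter, ← mul_sum, hb, sum_const, nsmul_eq_mul]
    ring
  linarith [sum_nonneg (s := univ) fun i _ => hterm i]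

namespace Matrix.IsHermitian

variable {n : Type*} [Fintype n] [DecidableEq n] {M : Matrix n n ℝ} (hM : M.IsHermitian)

theorem trace_mul_eq_sum_eigenvalues_mul (K : Matrix n n ℝ) :
    (M * K).trace = ∑ i, hM.eigenvalues i *
      (star (hM.eigenvectorUnitary : Matrix n n ℝ) * K * hM.eigenvectorUnitary) i i := by
  set U : Matrix n n ℝ := ↑hM.eigenvectorUnitary
  have hspec : M = U * diagonal hM.eigenvalues * star U := hM.spectral_theorem
  calc (M * K).trace = (U * (diagonal hM.eigenvalues * (star U * K))).trace := by
        conv_lhs => rw [hspec]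
        simp only [Matrix.mul_assoc]
    _ = (diagonal hM.eigenvalues * (star U * K * U)).trace := by
        rw [trace_mul_comm, Matrix.mul_assoc, Matrix.mul_assoc]
    _ = _ := by simp only [trace, diag, diagonal_mul]

theorem trace_mul_le_sum_eigenvalues_of_threshold {ι : Type*} [Fintype ι] {K : Matrix n n ℝ}
    (hK0 : 0 ≤ K) (hK1 : K ≤ 1) {lam : ι → ℝ} (σ : ι ≃ n)
    (hσ : ∀ i, lam i = hM.eigenvalues (σ i)) {s : Finset ι} {L : ℝ}
    (hs : ∀ i ∈ s, L ≤ lam i) (hsc : ∀ i ∉ s, lam i ≤ L) (htr : K.trace = #s) :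
    (M * K).trace ≤ ∑ i ∈ s, lam i := by
  set U : Matrix n n ℝ := ↑hM.eigenvectorUnitary
  set N := star U * K * U
  have hUU : star U * U = 1 := Unitary.coe_star_mul_self hM.eigenvectorUnitary
  have hN0 : 0 ≤ N := star_left_conjugate_nonneg hK0 U
  have hN1 : N ≤ 1 := by
    simpa [hUU] using star_left_conjugate_le_conjugate hK1 U
  have hdiag0 : ∀ i, 0 ≤ N i i := fun i => (nonneg_iff_posSemidef.mp hN0).diag_nonneg
  have hdiag1 : ∀ i, N i i ≤ 1 := fun i => by
    simpa using (nonneg_iff_posSemidef.mp (sub_nonneg.mpr hN1)).diag_nonneg (i := i)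
  have hsum : ∑ i, N i i = #s := by
    change N.trace = _
    rw [← htr, trace_mul_cycle, Unitary.mul_star_self_of_mem hM.eigenvectorUnitary.2,
      Matrix.one_mul]
  rw [hM.trace_mul_eq_sum_eigenvalues_mul, ← Equiv.sum_comp σ]
  simp_rw [← hσ]
  exact sum_mul_le_sum_of_threshold lam (fun i => N (σ i) (σ i)) hs hsc (fun _ => hdiag0 _)
    (fun _ => hdiag1 _) (by rw [Equiv.sum_comp σ (fun i => N i i), hsum])

end Matrix.IsHermitian

theorem Matrix.diagonal_mul_vecMulVec {n α : Type*} [Fintype n] [DecidableEq n]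
    [NonUnitalSemiring α] (d x y : n → α) :
    diagonal d * vecMulVec x y = vecMulVec (fun i => d i * x i) y := by
  rw [mul_vecMulVec]
  congr 1
  ext i
  exact mulVec_diagonal d x i

theorem Matrix.vecMulVec_mul_diagonal {n α : Type*} [Fintype n] [DecidableEq n]
    [NonUnitalSemiring α] (d x y : n → α) :
    vecMulVec x y * diagonal d = vecMulVec x (fun i => y i * d i) := by
  rw [vecMulVec_mul]
  congr 1
  ext i
  exact vecMul_diagonal y d i

theorem sum_card_filter_mem_eq_sum_card_inter {ι α : Type*} [Fintype ι] [DecidableEq α]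
    (T : ι → Finset α) (S : Finset α) :
    ∑ i ∈ S, #{j : ι | i ∈ T j} = ∑ j, #(T j ∩ S) := by
  simp_rw [inter_comm _ S, ← filter_mem_eq_inter, card_filter]
  exact sum_comm

section Qmat

variable {m : ℕ}

theorem indVec_mul_indVec (T S : Finset (Fin m)) (i : Fin m) :
    indVec m T i * indVec m S i = indVec m (T ∩ S) i := by
  by_cases hT : i ∈ T <;> by_cases hS : i ∈ S <;> simp [indVec, hT, hS]

theorem sum_indVec (T : Finset (Fin m)) : ∑ i, indVec m T i = #T := by
  simp [indVec]

theorem indVec_dotProduct_indVec (T S : Finset (Fin m)) :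
    indVec m T ⬝ᵥ indVec m S = #(T ∩ S) := by
  simp only [dotProduct, indVec_mul_indVec, sum_indVec]

theorem Qmat_eq_vecMulVec (T : Finset (Fin m)) :
    Qmat m T = diagonal (indVec m T) - (#T : ℝ)⁻¹ • vecMulVec (indVec m T) (indVec m T)
      + (m : ℝ)⁻¹ • vecMulVec 1 1 := by
  rw [Qmat, Pmat]
  congr 2
  ext i j
  simp [vecMulVec_apply]

theorem isSelfAdjoint_Qmat (T : Finset (Fin m)) : IsSelfAdjoint (Qmat m T) := by
  ext i j
  rcases eq_or_ne i j with rfl | h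
  · rfl
  · simp [Qmat, Pmat, vecMulVec_apply, h, h.symm, mul_comm]

theorem isIdempotentElem_Qmat {T : Finset (Fin m)} (hT : T.Nonempty) :
    IsIdempotentElem (Qmat m T) := by
  have hTc : (#T : ℝ) ≠ 0 := by exact_mod_cast hT.card_pos.ne'
  have hmc : (m : ℝ) ≠ 0 := by exact_mod_cast (Fin.pos hT.choose).ne'
  rw [IsIdempotentElem, Qmat_eq_vecMulVec]
  simp only [Matrix.add_mul, Matrix.mul_add, Matrix.sub_mul, Matrix.mul_sub, Matrix.smul_mul,
    Matrix.mul_smul, diagonal_mul_diagonal, diagonal_mul_vecMulVec, vecMulVec_mul_diagonal,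
    vecMulVec_mul_vecMulVec, smul_smul, indVec_mul_indVec, indVec_dotProduct_indVec, inter_self,
    vecMulVec_smul, dotProduct_one, one_dotProduct, Pi.one_apply, sum_indVec, one_mul, mul_one,
    sum_const, card_univ, Fintype.card_fin, nsmul_eq_mul]
  match_scalars <;> field_simp <;> ring

theorem isStarProjection_Qmat {T : Finset (Fin m)} (hT : T.Nonempty) :
    IsStarProjection (Qmat m T) :=
  ⟨isIdempotentElem_Qmat hT, isSelfAdjoint_Qmat T⟩

theorem trace_Qmat {T : Finset (Fin m)} (hT : T.Nonempty) : (Qmat m T).trace = #T := by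
  have hTc : (#T : ℝ) ≠ 0 := by exact_mod_cast hT.card_pos.ne'
  have hmc : (m : ℝ) ≠ 0 := by exact_mod_cast (Fin.pos hT.choose).ne'
  simp only [Qmat_eq_vecMulVec, trace_add, trace_sub, trace_smul, trace_vecMulVec,
    trace_diagonal, indVec_dotProduct_indVec, sum_indVec, one_dotProduct_one, inter_self,
    Fintype.card_fin, smul_eq_mul]
  field_simp
  ring

theorem trace_Qmat_mul_Qmat {T S : Finset (Fin m)} (hT : T.Nonempty) (hS : S.Nonempty) :
    (Qmat m T * Qmat m S).trace
      = #(T ∩ S) + (1 - #(T ∩ S) / #S) * (1 - #(T ∩ S) / #T) := by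
  have hTc : (#T : ℝ) ≠ 0 := by exact_mod_cast hT.card_pos.ne'
  have hSc : (#S : ℝ) ≠ 0 := by exact_mod_cast hS.card_pos.ne'
  have hmc : (m : ℝ) ≠ 0 := by exact_mod_cast (Fin.pos hT.choose).ne'
  simp only [Qmat_eq_vecMulVec, Matrix.add_mul, Matrix.mul_add, Matrix.sub_mul, Matrix.mul_sub,
    Matrix.smul_mul, Matrix.mul_smul, diagonal_mul_diagonal, diagonal_mul_vecMulVec,
    vecMulVec_mul_diagonal, vecMulVec_mul_vecMulVec, trace_add, trace_sub, trace_smul,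
    trace_vecMulVec, trace_diagonal, indVec_mul_indVec, indVec_dotProduct_indVec, sum_indVec,
    smul_eq_mul, one_mul, mul_one, dotProduct_smul, dotProduct_one, one_dotProduct,
    Pi.one_apply, inter_left_idem, inter_right_idem, sum_const, card_univ, Fintype.card_fin,
    nsmul_eq_mul]
  field_simp
  ring

theorem card_inter_le_trace_Qmat_mul_Qmat {T S : Finset (Fin m)} (hT : T.Nonempty)
    (hS : S.Nonempty) : (#(T ∩ S) : ℝ) ≤ (Qmat m T * Qmat m S).trace := by
  have hTS : (#(T ∩ S) : ℝ) ≤ #T := by exact_mod_cast card_le_card inter_subset_left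
  have hST : (#(T ∩ S) : ℝ) ≤ #S := by exact_mod_cast card_le_card inter_subset_right
  have hT0 : (0 : ℝ) < #T := by exact_mod_cast hT.card_pos
  have hS0 : (0 : ℝ) < #S := by exact_mod_cast hS.card_pos
  rw [trace_Qmat_mul_Qmat hT hS, le_add_iff_nonneg_right]
  exact mul_nonneg (sub_nonneg.2 ((div_le_one hS0).2 hST)) (sub_nonneg.2 ((div_le_one hT0).2 hTS))

theorem trace_sum_Qmat {n : ℕ} (T : Fin n → Finset (Fin m)) (hT : ∀ j, (T j).Nonempty) :
    (∑ j, Qmat m (T j)).trace = ∑ i, (#{j | i ∈ T j} : ℝ) := by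
  have hcount := sum_card_filter_mem_eq_sum_card_inter T univ
  simp only [inter_univ] at hcount
  rw [trace_sum, sum_congr rfl fun j _ => trace_Qmat (hT j)]
  exact_mod_cast hcount.symm

theorem sum_card_filter_mem_le_trace_sum_Qmat_mul_Qmat {n : ℕ} (T : Fin n → Finset (Fin m))
    (hT : ∀ j, (T j).Nonempty) {S : Finset (Fin m)} (hS : S.Nonempty) :
    ∑ i ∈ S, (#{j | i ∈ T j} : ℝ) ≤ ((∑ j, Qmat m (T j)) * Qmat m S).trace := by
  calc ∑ i ∈ S, (#{j | i ∈ T j} : ℝ) = ∑ j, (#(T j ∩ S) : ℝ) := by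
        exact_mod_cast sum_card_filter_mem_eq_sum_card_inter T S
    _ ≤ ∑ j, (Qmat m (T j) * Qmat m S).trace :=
        sum_le_sum fun j _ => card_inter_le_trace_Qmat_mul_Qmat (hT j) hS
    _ = ((∑ j, Qmat m (T j)) * Qmat m S).trace := by rw [Finset.sum_mul, trace_sum]

end Qmat

theorem stmt17_general (m n : ℕ) (T : Fin n → Finset (Fin m))
    (hTne : ∀ j, (T j).Nonempty)
    (a : Fin m → ℕ) (ha : ∀ i, a i = (Finset.univ.filter fun j => i ∈ T j).card)
    (M : Matrix (Fin m) (Fin m) ℝ) (hM : M = ∑ j, Qmat m (T j))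
    (hMh : M.IsHermitian)
    (lam : Fin m → ℝ) (hlamanti : Antitone lam)
    (hlameig : ∃ σ : Equiv.Perm (Fin m), ∀ i, lam i = hMh.eigenvalues (σ i)) :
    (∀ k : ℕ, k < m →
        ∑ i ∈ Finset.univ.filter (fun i : Fin m => (i : ℕ) < k), (a i : ℝ) ≤
          ∑ i ∈ Finset.univ.filter (fun i : Fin m => (i : ℕ) < k), lam i) ∧
      ∑ i, lam i = ∑ i, (a i : ℝ) := by
  obtain ⟨σ, hσ⟩ := hlameig
  subst hM
  simp only [ha]
  refine ⟨fun k hk => ?_, ?_⟩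
  · rcases k.eq_zero_or_pos with rfl | hk0
    · simp
    have hS : univ.filter (fun i : Fin m => (i : ℕ) < k) = Iio ⟨k, hk⟩ := by
      ext i
      simp [Fin.lt_def]
    have hSne : (Iio (⟨k, hk⟩ : Fin m)).Nonempty := ⟨⟨0, by omega⟩, by simp [Fin.lt_def, hk0]⟩
    rw [hS]
    refine (sum_card_filter_mem_le_trace_sum_Qmat_mul_Qmat T hTne hSne).trans ?_
    exact hMh.trace_mul_le_sum_eigenvalues_of_threshold (isStarProjection_Qmat hSne).nonneg
      (isStarProjection_Qmat hSne).le_one σ hσ (fun i hi => hlamanti (mem_Iio.1 hi).le)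
      (fun i hi => hlamanti (not_lt.1 (mem_Iio.not.1 hi))) (by rw [trace_Qmat hSne, Fin.card_Iio])
  · calc ∑ i, lam i = ∑ i, hMh.eigenvalues i := by
          simp_rw [hσ]
          exact Equiv.sum_comp σ _
      _ = (∑ j, Qmat m (T j)).trace := by simp [hMh.trace_eq_sum_eigenvalues]
      _ = _ := trace_sum_Qmat T hTne

theorem stmt17 (m n : ℕ) (hm : 1 ≤ m) (T : Fin n → Finset (Fin m))
    (hTne : ∀ j, (T j).Nonempty)
    (a : Fin m → ℕ) (ha : ∀ i, a i = (Finset.univ.filter fun j => i ∈ T j).card)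
    (haanti : Antitone a)
    (M : Matrix (Fin m) (Fin m) ℝ) (hM : M = ∑ j, Qmat m (T j))
    (hMh : M.IsHermitian)
    (lam : Fin m → ℝ) (hlamanti : Antitone lam)
    (hlameig : ∃ σ : Equiv.Perm (Fin m), ∀ i, lam i = hMh.eigenvalues (σ i)) :
    (∀ k : ℕ, k < m →
        ∑ i ∈ Finset.univ.filter (fun i : Fin m => (i : ℕ) < k), (a i : ℝ) ≤
          ∑ i ∈ Finset.univ.filter (fun i : Fin m => (i : ℕ) < k), lam i) ∧
      ∑ i, lam i = ∑ i, (a i : ℝ) :=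
  stmt17_general m n T hTne a ha M hM hMh lam hlamanti hlameig
end

section
/- If T_1,...,T_n are nested initial segments: T_j = {1,...,t_j} with m ≥ t_1 ≥ ... ≥ t_n ≥ 1, then M = ∑_j Q_{T_j} satisfies det M = ∏_{i=1}^m a_i, where a_i = #{j : t_j ≥ i}. -/
open Matrix Finset

/-! The rows of `helmertVec m` — the all-ones vector and the Helmert vectors
`(1, …, 1, -i, 0, …, 0)` — are pairwise orthogonal, hence form an invertible matrix `H`. Each is
an eigenvector of every `Q_T` with `T = {k | k < t}`: the all-ones vector is fixed; a Helmert
vector sums to zero, so it is fixed when its support lies in `T` and killed when it is constant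
on `T`, and one of the two always happens for an initial segment. Row `i` thus has eigenvalue
`#{j | i < t_j} = a_i` for `M`, i.e. `M Hᵀ = Hᵀ diag(a)`, and taking determinants gives the claim.
-/

lemma det_ne_zero_of_pairwise_dotProduct_eq_zero {ι R : Type*} [Fintype ι] [DecidableEq ι]
    [CommRing R] [LinearOrder R] [IsStrictOrderedRing R] (A : Matrix ι ι R) (horth : Pairwise fun i j => A i ⬝ᵥ A j = 0) (hA : ∀ i, A i ≠ 0) :
    A.det ≠ 0 := by
  have hgram : A * Aᵀ = diagonal fun i => A i ⬝ᵥ A i := by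
    ext i j
    rcases eq_or_ne i j with rfl | hij
    · simp [mul_apply']
    · simpa [mul_apply', hij] using horth hij
  have hdet : A.det * A.det = ∏ i, A i ⬝ᵥ A i := by
    rw [← det_diagonal, ← hgram, det_mul, det_transpose]
  intro h0
  rw [h0, zero_mul, eq_comm, prod_eq_zero_iff] at hdet
  obtain ⟨i, -, hi⟩ := hdet
  exact hA i (dotProduct_self_eq_zero.mp hi)

lemma mul_transpose_eq_transpose_mul_diagonal {ι R : Type*} [Fintype ι] [DecidableEq ι]
    [CommSemiring R] {A B : Matrix ι ι R} {d : ι → R} (h : ∀ i, A *ᵥ B i = d i • B i) :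
    A * Bᵀ = Bᵀ * diagonal d := by
  ext k i
  rw [mul_diagonal, transpose_apply]
  change (A *ᵥ B i) k = _
  rw [h i, Pi.smul_apply, smul_eq_mul, mul_comm]

section

variable {m : ℕ} {T : Finset (Fin m)} {v : Fin m → ℝ}

lemma Pmat_mulVec :
    Pmat m T *ᵥ v = indVec m T * v - ((T.card : ℝ)⁻¹ * (indVec m T ⬝ᵥ v)) • indVec m T := by
  ext k
  simp only [Pmat, sub_mulVec, smul_mulVec, vecMulVec_mulVec, Pi.sub_apply, Pi.smul_apply,
    mulVec_diagonal, Pi.mul_apply, op_smul_eq_smul, smul_eq_mul]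
  ring

lemma Pmat_mulVec_of_support_subset (hv : ∀ k ∉ T, v k = 0) (hsum : ∑ k, v k = 0) :
    Pmat m T *ᵥ v = v := by
  have hind : indVec m T * v = v := by
    ext k
    by_cases hk : k ∈ T <;> simp [indVec, hk, hv]
  have hdot : indVec m T ⬝ᵥ v = 0 := by
    rw [← hsum, ← congrArg (∑ k, · k) hind]
    rfl
  rw [Pmat_mulVec, hind, hdot, mul_zero, zero_smul, sub_zero]

lemma Pmat_mulVec_of_eq_on (hT : T.Nonempty) {c : ℝ} (hv : ∀ k ∈ T, v k = c) :
    Pmat m T *ᵥ v = 0 := by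
  have hind : indVec m T * v = c • indVec m T := by
    ext k
    by_cases hk : k ∈ T <;> simp [indVec, hk, hv]
  have hdot : indVec m T ⬝ᵥ v = T.card * c := by
    rw [show indVec m T ⬝ᵥ v = ∑ k, (indVec m T * v) k from rfl, hind]
    simp [indVec]
  have hcard : (T.card : ℝ) ≠ 0 := by positivity
  rw [Pmat_mulVec, hind, hdot, inv_mul_cancel_left₀ hcard, sub_self]

lemma Qmat_mulVec :
    Qmat m T *ᵥ v = Pmat m T *ᵥ v + ((m : ℝ)⁻¹ * ∑ k, v k) • 1 := by
  rw [Qmat, add_mulVec, smul_mulVec]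
  ext k
  simp [mulVec, dotProduct]

noncomputable def helmertVec (m : ℕ) (i k : Fin m) : ℝ :=
  if (i : ℕ) = 0 ∨ k < i then 1 else if k = i then -(i : ℝ) else 0

lemma helmertVec_of_val_eq_zero {i : Fin m} (hi : (i : ℕ) = 0) : helmertVec m i = 1 := by
  ext k
  simp [helmertVec, hi]

lemma helmertVec_of_lt {i k : Fin m} (hk : k < i) : helmertVec m i k = 1 := by
  simp [helmertVec, hk]

lemma helmertVec_of_gt {i k : Fin m} (hi : (i : ℕ) ≠ 0) (hk : i < k) : helmertVec m i k = 0 := by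
  simp [helmertVec, hi, hk.not_gt, hk.ne']

lemma sum_helmertVec {i : Fin m} (hi : (i : ℕ) ≠ 0) : ∑ k, helmertVec m i k = 0 := by
  have hsplit : ∀ k, helmertVec m i k =
      (if k < i then 1 else 0) + if i = k then -(i : ℝ) else 0 := by
    intro k
    rcases lt_trichotomy k i with hk | rfl | hk
    · simp [helmertVec, hk, hk.ne']
    · simp [helmertVec, hi]
    · simp [helmertVec, hi, hk.not_gt, hk.ne, hk.ne']
  simp only [hsplit, sum_add_distrib, sum_boole, sum_ite_eq, mem_univ, if_true]
  rw [filter_gt_eq_Iio, Fin.card_Iio, add_neg_cancel]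

lemma helmertVec_ne_zero (i : Fin m) : helmertVec m i ≠ 0 := by
  intro h
  have hii := congrFun h i
  by_cases hi : (i : ℕ) = 0 <;> simp_all [helmertVec]

lemma dotProduct_helmertVec_of_lt {i j : Fin m} (hij : i < j) :
    helmertVec m i ⬝ᵥ helmertVec m j = 0 := by
  have hj : (j : ℕ) ≠ 0 := by have : (i : ℕ) < j := hij; omega
  by_cases hi : (i : ℕ) = 0
  · rw [helmertVec_of_val_eq_zero hi, one_dotProduct, sum_helmertVec hj]
  · have hone : ∀ k, helmertVec m i k * helmertVec m j k = helmertVec m i k := by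
      intro k
      rcases lt_or_ge i k with hk | hk
      · rw [helmertVec_of_gt hi hk, zero_mul]
      · rw [helmertVec_of_lt (hk.trans_lt hij), mul_one]
    simp only [dotProduct, hone, sum_helmertVec hi]

lemma pairwise_dotProduct_helmertVec :
    Pairwise fun i j : Fin m => helmertVec m i ⬝ᵥ helmertVec m j = 0 := by
  intro i j hij
  rcases hij.lt_or_gt with h | h
  · exact dotProduct_helmertVec_of_lt h
  · rw [dotProduct_comm]
    exact dotProduct_helmertVec_of_lt h

lemma Qmat_filter_lt_mulVec_helmertVec {t : ℕ} (ht : 1 ≤ t) (htm : t ≤ m) (i : Fin m) :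
    Qmat m (univ.filter fun k : Fin m => (k : ℕ) < t) *ᵥ helmertVec m i =
      (if (i : ℕ) + 1 ≤ t then (1 : ℝ) else 0) • helmertVec m i := by
  set T := univ.filter fun k : Fin m => (k : ℕ) < t
  have hT : T.Nonempty := ⟨⟨0, by omega⟩, by simp [T]; omega⟩
  by_cases hi : (i : ℕ) = 0
  · have hm : (m : ℝ) ≠ 0 := by norm_cast; omega
    rw [if_pos (by omega), one_smul, helmertVec_of_val_eq_zero hi, Qmat_mulVec,
      Pmat_mulVec_of_eq_on hT (v := 1) (c := 1) fun _ _ => rfl, zero_add]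
    simp [hm]
  rw [Qmat_mulVec, sum_helmertVec hi, mul_zero, zero_smul, add_zero]
  split_ifs with hit
  · rw [one_smul]
    refine Pmat_mulVec_of_support_subset (fun k hk => helmertVec_of_gt hi ?_) (sum_helmertVec hi)
    simp only [T, mem_filter, mem_univ, true_and, not_lt] at hk
    exact Fin.lt_def.mpr (by omega)
  · rw [zero_smul]
    refine Pmat_mulVec_of_eq_on hT fun k hk => helmertVec_of_lt ?_
    simp only [T, mem_filter, mem_univ, true_and] at hk
    exact Fin.lt_def.mpr (by omega)

end

theorem stmt18_general (m n : ℕ)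
    (t : Fin n → ℕ)
    (ht1 : ∀ j, 1 ≤ t j) (htm : ∀ j, t j ≤ m)
    (T : Fin n → Finset (Fin m))
    (hT : ∀ j, T j = Finset.univ.filter fun i : Fin m => (i : ℕ) < t j)
    (M : Matrix (Fin m) (Fin m) ℝ) (hM : M = ∑ j, Qmat m (T j))
    (a : Fin m → ℕ)
    (ha : ∀ i : Fin m, a i = (Finset.univ.filter fun j => (i : ℕ) + 1 ≤ t j).card) :
    M.det = ∏ i, (a i : ℝ) := by
  set H : Matrix (Fin m) (Fin m) ℝ := Matrix.of (helmertVec m)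
  have heig : ∀ i, M *ᵥ H i = (a i : ℝ) • H i := by
    intro i
    change M *ᵥ helmertVec m i = (a i : ℝ) • helmertVec m i
    simp only [hM, sum_mulVec, hT, Qmat_filter_lt_mulVec_helmertVec (ht1 _) (htm _)]
    rw [← sum_smul, sum_boole, ha]
  have hdet : M.det * H.det = H.det * ∏ i, (a i : ℝ) := by
    rw [← det_transpose H, ← det_diagonal, ← det_mul, ← det_mul,
      mul_transpose_eq_transpose_mul_diagonal heig]
  exact mul_right_cancel₀ (det_ne_zero_of_pairwise_dotProduct_eq_zero H
    pairwise_dotProduct_helmertVec helmertVec_ne_zero) (hdet.trans (mul_comm _ _))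

theorem stmt18 (m n : ℕ) (hm : 1 ≤ m) (hn : 1 ≤ n)
    (t : Fin n → ℕ) (htanti : Antitone t)
    (ht1 : ∀ j, 1 ≤ t j) (htm : ∀ j, t j ≤ m)
    (htop : ∀ j : Fin n, (j : ℕ) = 0 → t j = m)
    (T : Fin n → Finset (Fin m))
    (hT : ∀ j, T j = Finset.univ.filter fun i : Fin m => (i : ℕ) < t j)
    (M : Matrix (Fin m) (Fin m) ℝ) (hM : M = ∑ j, Qmat m (T j))
    (a : Fin m → ℕ)
    (ha : ∀ i : Fin m, a i = (Finset.univ.filter fun j => (i : ℕ) + 1 ≤ t j).card) :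
    M.det = ∏ i, (a i : ℝ) :=
  stmt18_general m n t ht1 htm T hT M hM a ha
end
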